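/- arXiv:1310.3293 — 7 statements merged into one kernel-verified Lean document; each statement's English description precedes it below -/
import Mathlib

section
/- Let q be a prime power and d < q a positive integer. The average cardinality of the value set over all monic polynomials f ∈ F_q[T] of degree d with f(0)=0 equals Σ_{r=1}^{d} (-1)^{r-1} · C(q,r) · q^{1-r}, where C(q,r) is the binomial coefficient. -/
/-! By inclusion–exclusion over the subsets `S` of `F` on which `f` is constant,
`V(f) = ∑_{S ≠ ∅} (-1)^(|S|+1) · #{v | f = v on S}`. Summed over `f`, the pairs `(f, v)` with
`f = v` on `S` are exactly the monic polynomials `f - v` of degree `d` divisible by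
`∏_{c ∈ S} (X - c)`, of which there are `q^(d-|S|)` when `|S| ≤ d` and none otherwise.
Grouping the subsets by size gives the binomial sum. -/

open Polynomial Finset

namespace Finset

theorem card_image_eq_sum_powerset {α β M : Type*} [DecidableEq β] [CommRing M]
    (s : Finset α) (φ : α → β) :
    (#(s.image φ) : M)
      = ∑ t ∈ s.powerset with t.Nonempty,
          (-1 : M) ^ (#t + 1) * Nat.card {v // ∀ c ∈ t, φ c = v} := by
  have hinf (t : Finset α) (ht : t.Nonempty) :
      #(t.inf' ht fun c => {φ c}) = Nat.card {v // ∀ c ∈ t, φ c = v} := by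
    rw [← Nat.card_eq_finsetCard]
    exact Nat.card_congr (Equiv.subtypeEquivRight fun v => by simp [eq_comm])
  have hincl := inclusion_exclusion_card_biUnion s fun c => {φ c}
  rw [biUnion_singleton] at hincl
  rw [← Int.cast_natCast, hincl]
  push_cast
  simp only [hinf]
  exact sum_coe_sort _ fun t => (-1 : M) ^ (#t + 1) * Nat.card {v // ∀ c ∈ t, φ c = v}

theorem sum_powerset_nonempty_apply_card {α M : Type*} [AddCommMonoid M] (s : Finset α)
    (g : ℕ → M) :
    ∑ t ∈ s.powerset with t.Nonempty, g #t = ∑ r ∈ Icc 1 #s, (#s).choose r • g r := by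
  rw [sum_filter]
  simp_rw [← card_pos]
  rw [sum_powerset_apply_card (fun r => if 0 < r then g r else 0), Nat.range_succ_eq_Icc_zero,
    Icc_eq_cons_Ioc (Nat.zero_le _), sum_cons, ← Icc_add_one_left_eq_Ioc, zero_add]
  simp only [lt_self_iff_false, if_false, smul_zero, zero_add]
  exact sum_congr rfl fun r hr => by rw [if_pos (show 0 < r from (mem_Icc.mp hr).1)]

theorem sum_Icc_choose_smul_ite_le {M : Type*} [AddCommMonoid M] (q d : ℕ) (a : ℕ → M) :
    ∑ r ∈ Icc 1 q, q.choose r • (if r ≤ d then a r else 0) = ∑ r ∈ Icc 1 d, q.choose r • a r := by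
  calc ∑ r ∈ Icc 1 q, q.choose r • (if r ≤ d then a r else 0)
      = ∑ r ∈ Icc 1 (min q d), q.choose r • a r := by
        rw [← sum_subset (Icc_subset_Icc_right (min_le_left q d))]
        · refine sum_congr rfl fun r hr => ?_
          rw [if_pos ((mem_Icc.mp hr).2.trans (min_le_right q d))]
        · intro r hr hr'
          simp_all
    _ = ∑ r ∈ Icc 1 d, q.choose r • a r := by
        refine sum_subset (Icc_subset_Icc_right (min_le_right q d)) fun r hr hr' => ?_
        simp_all [Nat.choose_eq_zero_of_lt]

end Finset

namespace Polynomial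

section Semiring
variable {R : Type*} [Semiring R]

theorem natCard_monic_natDegree_dvd_eq_zero {m : R[X]} (hm : m.Monic) {n : ℕ}
    (hnm : n < m.natDegree) :
    Nat.card {p : R[X] // (p.Monic ∧ p.natDegree = n) ∧ m ∣ p} = 0 := by
  rw [Nat.card_eq_zero]
  left
  refine ⟨fun ⟨p, ⟨hp, hpn⟩, g, hpg⟩ => ?_⟩
  have hg : g.Monic := hm.of_mul_monic_left (hpg ▸ hp)
  rw [hpg, hm.natDegree_mul hg] at hpn
  omega

variable [Nontrivial R]

noncomputable def monicEquivFun (n : ℕ) : {p : R[X] // p.Monic ∧ p.natDegree = n} ≃ (Fin n → R) :=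
  (monicEquivDegreeLT n).trans (degreeLTEquiv R n).toEquiv

theorem coe_monicEquivFun_symm_apply (n : ℕ) (a : Fin n → R) :
    ((monicEquivFun n).symm a : R[X]) = X ^ n + ∑ i : Fin n, C (a i) * X ^ (i : ℕ) := by
  simp [monicEquivFun, monicEquivDegreeLT, degreeLTEquiv, C_mul_X_pow_eq_monomial]

theorem natCard_monic_natDegree_eq_pow (n : ℕ) :
    Nat.card {p : R[X] // p.Monic ∧ p.natDegree = n} = Nat.card R ^ n := by
  rw [Nat.card_congr (monicEquivFun n), Nat.card_fun, Nat.card_fin]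

end Semiring

section Ring
variable {R : Type*} [Ring R] [Nontrivial R]

theorem natCard_monic_natDegree_dvd_eq_pow {m : R[X]} (hm : m.Monic) {n : ℕ}
    (hmn : m.natDegree ≤ n) :
    Nat.card {p : R[X] // (p.Monic ∧ p.natDegree = n) ∧ m ∣ p}
      = Nat.card R ^ (n - m.natDegree) := by
  rw [← natCard_monic_natDegree_eq_pow]
  symm
  refine Nat.card_eq_of_bijective
    (fun h => ⟨m * h.1, ⟨hm.mul h.2.1, by rw [hm.natDegree_mul h.2.1, h.2.2]; omega⟩,
      dvd_mul_right _ _⟩) ⟨fun g h hgh => ?_, fun p => ?_⟩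
  · exact Subtype.ext (hm.isRegular.left (congrArg Subtype.val hgh))
  · obtain ⟨p, ⟨hp, hpn⟩, g, rfl⟩ := p
    have hg : g.Monic := hm.of_mul_monic_left hp
    refine ⟨⟨g, hg, ?_⟩, rfl⟩
    rw [hm.natDegree_mul hg] at hpn
    omega

noncomputable def monicSuccEquivProd (e : ℕ) :
    (Fin e → R) × R ≃ {p : R[X] // p.Monic ∧ p.natDegree = e + 1} :=
  ((Equiv.prodComm _ _).trans ((Equiv.neg R).prodCongr (Equiv.refl _))).trans
    ((Fin.consEquiv fun _ => R).trans (monicEquivFun (e + 1)).symm)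

theorem coe_monicSuccEquivProd_apply (e : ℕ) (b : Fin e → R) (v : R) :
    (monicSuccEquivProd e (b, v) : R[X])
      = X ^ (e + 1) + ∑ i : Fin e, C (b i) * X ^ ((i : ℕ) + 1) - C v := by
  simp [monicSuccEquivProd, coe_monicEquivFun_symm_apply, Fin.sum_univ_succ, Fin.consEquiv]
  abel

end Ring

section Domain
variable {R : Type*} [CommRing R] [IsDomain R]

theorem prod_X_sub_C_dvd_iff {p : R[X]} (hp : p ≠ 0) (S : Finset R) :
    (∏ c ∈ S, (X - C c)) ∣ p ↔ ∀ c ∈ S, p.IsRoot c := by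
  rw [Finset.prod_eq_multiset_prod, Multiset.prod_X_sub_C_dvd_iff_le_roots hp,
    Multiset.le_iff_subset S.nodup]
  simp [Multiset.subset_iff, mem_roots hp]

theorem natCard_monic_natDegree_forall_isRoot (n : ℕ) (S : Finset R) :
    Nat.card {p : R[X] // (p.Monic ∧ p.natDegree = n) ∧ ∀ c ∈ S, p.IsRoot c}
      = if #S ≤ n then Nat.card R ^ (n - #S) else 0 := by
  have hm : (∏ c ∈ S, (X - C c)).Monic := monic_prod_X_sub_C id S
  have hdeg : (∏ c ∈ S, (X - C c)).natDegree = #S := natDegree_finsetProd_X_sub_C_eq_card S id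
  rw [Nat.card_congr (Equiv.subtypeEquivRight fun p =>
    and_congr_right fun hp => (prod_X_sub_C_dvd_iff hp.1.ne_zero S).symm)]
  split_ifs with h
  · rw [natCard_monic_natDegree_dvd_eq_pow hm (hdeg ▸ h), hdeg]
  · exact natCard_monic_natDegree_dvd_eq_zero hm (hdeg ▸ not_le.mp h)

theorem sum_natCard_forall_eval_eq [Fintype R] {d : ℕ} (hd : 0 < d) (S : Finset R) :
    ∑ b : Fin (d - 1) → R,
        Nat.card {v // ∀ c ∈ S, (X ^ d + ∑ i : Fin (d - 1), C (b i) * X ^ ((i : ℕ) + 1)).eval c = v}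
      = if #S ≤ d then Fintype.card R ^ (d - #S) else 0 := by
  rw [← Nat.card_sigma, ← Nat.card_congr (Equiv.subtypeProdEquivSigmaSubtype _),
    ← Nat.card_eq_fintype_card, ← natCard_monic_natDegree_forall_isRoot]
  obtain ⟨e, rfl⟩ : ∃ e, d = e + 1 := ⟨d - 1, by omega⟩
  refine Nat.card_congr (((monicSuccEquivProd e).subtypeEquiv fun ⟨b, v⟩ => ?_).trans
    (Equiv.subtypeSubtypeEquivSubtypeInter _ _))
  simp [coe_monicSuccEquivProd_apply, sub_eq_zero]

end Domain

end Polynomial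

theorem stmt_1_general {F : Type*} [Field F] [Fintype F] [DecidableEq F] (q d : ℕ)
    (hq : Fintype.card F = q) (hd : 0 < d)
    (f : (Fin (d - 1) → F) → Polynomial F)
    (hf : ∀ b, f b = X ^ d + ∑ i : Fin (d - 1), C (b i) * X ^ ((i : ℕ) + 1)) :
    (∑ b : Fin (d - 1) → F,
        ((Finset.image (fun c => (f b).eval c) Finset.univ).card : ℝ)) / (q : ℝ) ^ (d - 1)
      = ∑ r ∈ Finset.Icc 1 d,
          (-1 : ℝ) ^ (r - 1) * (Nat.choose q r : ℝ) * (q : ℝ) ^ ((1 : ℤ) - (r : ℤ)) := by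
  have hq0 : (q : ℝ) ≠ 0 := by rw [← hq]; exact_mod_cast Fintype.card_ne_zero
  have htotal : ∑ b, (#(univ.image fun c => (f b).eval c) : ℝ)
      = ∑ r ∈ Icc 1 d, q.choose r • ((-1 : ℝ) ^ (r + 1) * (q : ℝ) ^ (d - r)) := by
    simp_rw [hf, card_image_eq_sum_powerset]
    rw [sum_comm]
    simp_rw [← mul_sum, ← Nat.cast_sum, sum_natCard_forall_eval_eq hd, hq]
    push_cast
    simp_rw [mul_ite, mul_zero]
    rw [sum_powerset_nonempty_apply_card _
      fun r => if r ≤ d then (-1 : ℝ) ^ (r + 1) * (q : ℝ) ^ (d - r) else 0,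
      card_univ, hq, sum_Icc_choose_smul_ite_le]
  rw [htotal, sum_div]
  refine sum_congr rfl fun r hr => ?_
  obtain ⟨hr1, hrd⟩ := mem_Icc.mp hr
  have hsign : (-1 : ℝ) ^ (r + 1) = (-1) ^ (r - 1) := by
    rw [show r + 1 = r - 1 + 2 by omega, pow_add, neg_one_sq, mul_one]
  have hpow : (q : ℝ) ^ (d - r) / (q : ℝ) ^ (d - 1) = (q : ℝ) ^ ((1 : ℤ) - r) := by
    rw [← zpow_natCast, ← zpow_natCast, ← zpow_sub₀ hq0]
    congr 1
    omega
  rw [nsmul_eq_mul, hsign, mul_left_comm, mul_div_assoc, mul_div_assoc, hpow]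
  ring

/-- The average cardinality of the value set over all monic polynomials
`f ∈ F_q[T]` of degree `d` (with `d < q`) satisfying `f(0) = 0` equals
`∑_{r=1}^{d} (-1)^{r-1} C(q,r) q^{1-r}`.  Such polynomials are parametrized by their
coefficients `b : Fin (d-1) → F` via `f_b = X^d + ∑ i, b i • X^{i+1}`. -/
theorem stmt_1 {F : Type*} [Field F] [Fintype F] [DecidableEq F] (q d : ℕ)
    (hq : Fintype.card F = q) (hd : 0 < d) (hdq : d < q)
    (f : (Fin (d - 1) → F) → Polynomial F)
    (hf : ∀ b, f b = X ^ d + ∑ i : Fin (d - 1), C (b i) * X ^ ((i : ℕ) + 1)) :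
    (∑ b : Fin (d - 1) → F,
        ((Finset.image (fun c => (f b).eval c) Finset.univ).card : ℝ)) / (q : ℝ) ^ (d - 1)
      = ∑ r ∈ Finset.Icc 1 d,
          (-1 : ℝ) ^ (r - 1) * (Nat.choose q r : ℝ) * (q : ℝ) ^ ((1 : ℤ) - (r : ℤ)) :=
  stmt_1_general q d hq hd f hf
end

section
/- Let K be a field, f ∈ K[T] a polynomial, and define the divided differences Δ^0 f(X_1) := f(X_1) and Δ^i f(X_1,...,X_{i+1}) := (Δ^{i-1}f(X_1,...,X_i) - Δ^{i-1}f(X_1,...,X_{i-1},X_{i+1}))/(X_i - X_{i+1}). If α_1,...,α_r are elements of K with Δ^{i-1}f(α_1,...,α_i) = 0 for all 1 ≤ i ≤ r, then f(α_i) = 0 for all 1 ≤ i ≤ r. -/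
open Polynomial MvPolynomial

/-- A family `Δ i` of multivariate polynomials (in variables `X_0, …, X_i`) is the family of
divided differences of a univariate polynomial `f`:
`Δ^0 f = f(X_0)` and `(X_i - X_{i+1}) · Δ^{i+1} f = Δ^i f(X_0,…,X_i) - Δ^i f(X_0,…,X_{i-1},X_{i+1})`
(the division is exact, so this recursion characterizes the polynomials `Δ^i f`). -/
def IsDividedDifferenceFamily {R : Type*} [CommRing R] (f : Polynomial R)
    (Δ : (i : ℕ) → MvPolynomial (Fin (i + 1)) R) : Prop :=
  Δ 0 = Polynomial.aeval (MvPolynomial.X (0 : Fin 1)) f ∧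
  ∀ i : ℕ,
    (MvPolynomial.X ((Fin.last i).castSucc) - MvPolynomial.X (Fin.last (i + 1))) * Δ (i + 1) =
      MvPolynomial.rename Fin.castSucc (Δ i) -
        MvPolynomial.rename
          (fun j : Fin (i + 1) => if j = Fin.last i then Fin.last (i + 1) else j.castSucc) (Δ i)

/-! Fix `c` and evaluate `Δ^k f` at `(a_0, …, a_{k-1}, c)`. Evaluating the defining recursion of
`Δ^{k+1} f` at `(a_0, …, a_k, c)` gives
`(a_k - c) Δ^{k+1} f(a_0, …, a_k, c) = Δ^k f(a_0, …, a_k) - Δ^k f(a_0, …, a_{k-1}, c)`,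
so once all `Δ^k f(a_0, …, a_k)` vanish, the vanishing at `(a_0, …, a_{n-1}, c)` propagates down
to `k = 0`, where it reads `f(c) = 0`. Taking `c = a_n` gives the theorem. -/

namespace IsDividedDifferenceFamily

variable {R : Type*} [CommRing R] {f : R[X]} {Δ : (i : ℕ) → MvPolynomial (Fin (i + 1)) R}

theorem eval_zero (hΔ : IsDividedDifferenceFamily f Δ) (x : Fin 1 → R) :
    MvPolynomial.eval x (Δ 0) = f.eval (x 0) := by
  rw [hΔ.1, Polynomial.aeval_def, Polynomial.hom_eval₂, MvPolynomial.eval_X,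
    show (MvPolynomial.eval x).comp (algebraMap R _) = RingHom.id R from eval₂Hom_comp_C _ _]
  rfl

theorem mul_eval_snoc_succ (hΔ : IsDividedDifferenceFamily f Δ) (a : ℕ → R) (c : R) (k : ℕ) :
    (a k - c) *
        MvPolynomial.eval (Fin.snoc (α := fun _ => R) (fun j : Fin (k + 1) => a j) c) (Δ (k + 1)) =
      MvPolynomial.eval (fun j : Fin (k + 1) => a j) (Δ k) -
        MvPolynomial.eval (Fin.snoc (α := fun _ => R) (fun j : Fin k => a j) c) (Δ k) := by
  have h_castSucc : Fin.snoc (α := fun _ => R) (fun j : Fin (k + 1) => a j) c ∘ Fin.castSucc =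
      fun j : Fin (k + 1) => a j :=
    funext fun j => Fin.snoc_castSucc (α := fun _ => R) ..
  have h_replaceLast : (Fin.snoc (α := fun _ => R) (fun j : Fin (k + 1) => a j) c ∘
      fun j : Fin (k + 1) => if j = Fin.last k then Fin.last (k + 1) else j.castSucc) =
      Fin.snoc (α := fun _ => R) (fun j : Fin k => a j) c := by
    funext j
    induction j using Fin.lastCases <;> simp
  simpa [eval_rename, h_castSucc, h_replaceLast] using
    congrArg (MvPolynomial.eval (Fin.snoc (α := fun _ => R) (fun j : Fin (k + 1) => a j) c))
      (hΔ.2 k)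

theorem eval_snoc_eq_zero_of_le (hΔ : IsDividedDifferenceFamily f Δ) {a : ℕ → R} {c : R}
    {n : ℕ} (hpre : ∀ k < n, MvPolynomial.eval (fun j : Fin (k + 1) => a j) (Δ k) = 0)
    (hn : MvPolynomial.eval (Fin.snoc (α := fun _ => R) (fun j : Fin n => a j) c) (Δ n) = 0)
    {k : ℕ} (hk : k ≤ n) :
    MvPolynomial.eval (Fin.snoc (α := fun _ => R) (fun j : Fin k => a j) c) (Δ k) = 0 := by
  induction hk using Nat.decreasingInduction with
  | self => exact hn
  | of_succ k hk ih =>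
    have := hΔ.mul_eval_snoc_succ a c k
    rwa [ih, mul_zero, hpre k hk, zero_sub, eq_comm, neg_eq_zero] at this

theorem eval_eq_zero_of_eval_snoc_eq_zero (hΔ : IsDividedDifferenceFamily f Δ) {a : ℕ → R}
    {c : R} {n : ℕ} (hpre : ∀ k < n, MvPolynomial.eval (fun j : Fin (k + 1) => a j) (Δ k) = 0)
    (hn : MvPolynomial.eval (Fin.snoc (α := fun _ => R) (fun j : Fin n => a j) c) (Δ n) = 0) :
    f.eval c = 0 := by
  have := hΔ.eval_snoc_eq_zero_of_le hpre hn (Nat.zero_le n)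
  rwa [hΔ.eval_zero, show (0 : Fin 1) = Fin.last 0 from rfl, Fin.snoc_last] at this

end IsDividedDifferenceFamily

/-- If all the divided differences `Δ^{i-1} f(α_1,…,α_i)` vanish for
`1 ≤ i ≤ r`, then `f(α_i) = 0` for all `1 ≤ i ≤ r` (the `α_i` need not be distinct). -/
theorem stmt_2 {K : Type*} [Field K] (f : Polynomial K)
    (Δ : (i : ℕ) → MvPolynomial (Fin (i + 1)) K)
    (hΔ : IsDividedDifferenceFamily f Δ)
    (r : ℕ) (α : Fin r → K)
    (h : ∀ i : Fin r,
      MvPolynomial.eval (fun j : Fin ((i : ℕ) + 1) => α (Fin.castLE i.isLt j)) (Δ i) = 0) :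
    ∀ i : Fin r, f.eval (α i) = 0 := by
  intro i
  set a : ℕ → K := fun j => if hj : j < r then α ⟨j, hj⟩ else 0
  have h_prefix (k : ℕ) (hk : k < r) :
      (fun j : Fin (k + 1) => a j) = fun j => α (Fin.castLE hk j) := by
    funext j
    simp [a, Fin.castLE, show (j : ℕ) < r by omega]
  have h_snoc : Fin.snoc (α := fun _ => K) (fun j : Fin i => a j) (α i) =
      fun j : Fin (i + 1) => a j := by
    funext j
    induction j using Fin.lastCases <;> simp [a]
  refine hΔ.eval_eq_zero_of_eval_snoc_eq_zero (a := a) (n := i) (fun k hk => ?_) ?_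
  · rw [h_prefix k (hk.trans i.isLt)]
    exact h ⟨k, hk.trans i.isLt⟩
  · rw [h_snoc, h_prefix i i.isLt]
    exact h i
end

section
/- Let K be a field and consider the polynomial ring K[X_1,...,X_n] with a weight function wt assigning positive integer weight a_i to X_i. If f ∈ K[X_1,...,X_n] is nonconstant and its weighted homogeneous component of highest weight is irreducible in K[X_1,...,X_n], then f is irreducible in K[X_1,...,X_n]. -/
/-!
Write `F` for the top weighted homogeneous component of `f`. In the coefficient of a monomial of
weight `wt f + wt g` in `f g`, only pairs of monomials of weights exactly `wt f` and `wt g`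
contribute, so the component of `f g` of that weight is `F G`, which is nonzero over a domain.
Hence the top component is multiplicative and `f = p q` gives `F = P Q`. Units of a polynomial
ring over a reduced ring are constants, so a unit `P` forces `wt p = 0`, and then `p = P`.
-/

namespace MvPolynomial

variable {σ R : Type*} (w : σ → ℕ)

section CommSemiring

variable [CommSemiring R] {f g : MvPolynomial σ R}

theorem coeff_eq_zero_of_weightedTotalDegree_lt {d : σ →₀ ℕ}
    (hd : weightedTotalDegree w f < Finsupp.weight w d) : coeff d f = 0 :=
  notMem_support_iff.mp fun hmem => (le_weightedTotalDegree w hmem).not_gt hd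

theorem weightedTotalDegree_mul_le :
    weightedTotalDegree w (f * g) ≤ weightedTotalDegree w f + weightedTotalDegree w g := by
  classical
  refine Finset.sup_le fun d hd => ?_
  obtain ⟨a, ha, b, hb, rfl⟩ := Finset.mem_add.mp (support_mul f g hd)
  rw [map_add]
  exact add_le_add (le_weightedTotalDegree w ha) (le_weightedTotalDegree w hb)

theorem weightedHomogeneousComponent_mul_of_weightedTotalDegree_le {p q : ℕ}
    (hf : weightedTotalDegree w f ≤ p) (hg : weightedTotalDegree w g ≤ q) :
    weightedHomogeneousComponent w (p + q) (f * g) =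
      weightedHomogeneousComponent w p f * weightedHomogeneousComponent w q g := by
  classical
  ext d
  rw [coeff_weightedHomogeneousComponent]
  split_ifs with hd
  · rw [coeff_mul, coeff_mul]
    refine Finset.sum_congr rfl fun x hx => ?_
    rw [Finset.HasAntidiagonal.mem_antidiagonal] at hx
    rw [← hx, map_add] at hd
    simp only [coeff_weightedHomogeneousComponent]
    rcases lt_trichotomy (Finsupp.weight w x.1) p with h | h | h
    · rw [coeff_eq_zero_of_weightedTotalDegree_lt w (hg.trans_lt (by omega)), ite_self, mul_zero,
        mul_zero]
    · rw [if_pos h, if_pos (by omega)]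
    · rw [coeff_eq_zero_of_weightedTotalDegree_lt w (hf.trans_lt h), ite_self, zero_mul, zero_mul]
  · exact ((weightedHomogeneousComponent_isWeightedHomogeneous p f).mul
      (weightedHomogeneousComponent_isWeightedHomogeneous q g)).coeff_eq_zero d hd |>.symm

theorem weightedHomogeneousComponent_weightedTotalDegree_ne_zero (hf : f ≠ 0) :
    weightedHomogeneousComponent w (weightedTotalDegree w f) f ≠ 0 := by
  classical
  obtain ⟨d, hd, hsup⟩ :=
    Finset.exists_mem_eq_sup f.support (support_nonempty.mpr hf) (Finsupp.weight w)
  refine ne_zero_iff.mpr ⟨d, ?_⟩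
  rw [coeff_weightedHomogeneousComponent, weightedTotalDegree, hsup, if_pos rfl]
  exact mem_support_iff.mp hd

theorem weightedHomogeneousComponent_weightedTotalDegree_eq_self
    (hf : weightedTotalDegree w f = 0) :
    weightedHomogeneousComponent w (weightedTotalDegree w f) f = f := by
  rw [hf]
  exact (isWeightedHomogeneous_zero_iff_weightedTotalDegree_eq_zero.mpr hf)
    |>.weightedHomogeneousComponent_same

section NoZeroDivisors

variable [NoZeroDivisors R]

theorem weightedTotalDegree_mul (hf : f ≠ 0) (hg : g ≠ 0) :
    weightedTotalDegree w (f * g) = weightedTotalDegree w f + weightedTotalDegree w g := by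
  refine le_antisymm (weightedTotalDegree_mul_le w) (not_lt.mp fun hlt => ?_)
  have htop := weightedHomogeneousComponent_mul_of_weightedTotalDegree_le w
    (le_refl (weightedTotalDegree w f)) (le_refl (weightedTotalDegree w g))
  rw [weightedHomogeneousComponent_eq_zero _ _ hlt] at htop
  exact mul_ne_zero (weightedHomogeneousComponent_weightedTotalDegree_ne_zero w hf)
    (weightedHomogeneousComponent_weightedTotalDegree_ne_zero w hg) htop.symm

theorem weightedHomogeneousComponent_weightedTotalDegree_mul (hf : f ≠ 0) (hg : g ≠ 0) :
    weightedHomogeneousComponent w (weightedTotalDegree w (f * g)) (f * g) =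
      weightedHomogeneousComponent w (weightedTotalDegree w f) f *
        weightedHomogeneousComponent w (weightedTotalDegree w g) g := by
  rw [weightedTotalDegree_mul w hf hg]
  exact weightedHomogeneousComponent_mul_of_weightedTotalDegree_le w le_rfl le_rfl

end NoZeroDivisors

end CommSemiring

section CommRing

variable [CommRing R]

theorem isUnit_weightedHomogeneousComponent_weightedTotalDegree_iff [IsReduced R]
    [Nontrivial R] {f : MvPolynomial σ R} :
    IsUnit (weightedHomogeneousComponent w (weightedTotalDegree w f) f) ↔ IsUnit f := by
  refine ⟨fun h => ?_, fun h => ?_⟩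
  · obtain ⟨r, -, hr⟩ := isUnit_iff_eq_C_of_isReduced.mp h
    have hdeg : weightedTotalDegree w f = 0 :=
      (weightedHomogeneousComponent_isWeightedHomogeneous _ f).inj_right h.ne_zero
        (hr ▸ isWeightedHomogeneous_C w r)
    rwa [weightedHomogeneousComponent_weightedTotalDegree_eq_self w hdeg] at h
  · obtain ⟨r, -, rfl⟩ := isUnit_iff_eq_C_of_isReduced.mp h
    rwa [weightedHomogeneousComponent_weightedTotalDegree_eq_self w
      (isWeightedHomogeneous_zero_iff_weightedTotalDegree_eq_zero.mp
        (isWeightedHomogeneous_C w r))]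

theorem irreducible_of_irreducible_weightedHomogeneousComponent_weightedTotalDegree
    [IsDomain R] {f : MvPolynomial σ R}
    (h : Irreducible (weightedHomogeneousComponent w (weightedTotalDegree w f) f)) :
    Irreducible f := by
  have hf : f ≠ 0 := by
    rintro rfl
    exact h.ne_zero (by simp)
  refine ⟨fun hu => h.not_isUnit
    ((isUnit_weightedHomogeneousComponent_weightedTotalDegree_iff w).mpr hu), ?_⟩
  rintro p q rfl
  obtain ⟨hp, hq⟩ := mul_ne_zero_iff.mp hf
  simpa only [isUnit_weightedHomogeneousComponent_weightedTotalDegree_iff] using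
    h.isUnit_or_isUnit (weightedHomogeneousComponent_weightedTotalDegree_mul w hp hq)

end CommRing

end MvPolynomial

theorem stmt_5_general {K : Type*} [Field K] {n : ℕ} (w : Fin n → ℕ)
    (f : MvPolynomial (Fin n) K)
    (hirr : Irreducible
      (MvPolynomial.weightedHomogeneousComponent w (MvPolynomial.weightedTotalDegree w f) f)) :
    Irreducible f :=
  MvPolynomial.irreducible_of_irreducible_weightedHomogeneousComponent_weightedTotalDegree w hirr

/-- Let `K` be a field and give `K[X_1,…,X_n]` the weight function assigning
positive weight `w i` to `X_i`.  If `f` is nonconstant and its weighted homogeneous component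
of highest weight is irreducible, then `f` is irreducible. -/
theorem stmt_5 {K : Type*} [Field K] {n : ℕ} (w : Fin n → ℕ) (hw : ∀ i, 0 < w i)
    (f : MvPolynomial (Fin n) K) (hf : ∀ c : K, f ≠ MvPolynomial.C c)
    (hirr : Irreducible
      (MvPolynomial.weightedHomogeneousComponent w (MvPolynomial.weightedTotalDegree w f) f)) :
    Irreducible f :=
  stmt_5_general w f hirr
end

section
/- Let K be an algebraically closed field, and let g ∈ K[X,Y] be a polynomial that is the sum of two nonzero homogeneous polynomials h_d and h_{d+1} of consecutive degrees d and d+1 having no common (non-unit) factor. Then g is irreducible in K[X,Y]. -/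
/-!
Substituting `X ↦ t • X` sends `g = h_d + h_{d+1}` to `h_d t^d + h_{d+1} t^(d+1)`, whose `t`-degree
exceeds its `t`-order by one. Degree and order in `t` are additive, so in a factorization `g = a b`
one factor, say `a`, becomes a single term `c t^m`; setting `t = 1` gives `a = c`, and `c` divides
the lowest and highest coefficients `h_d` and `h_{d+1}`, hence is a unit.
-/

namespace Polynomial
variable {R : Type*} [Semiring R]

theorem eq_C_trailingCoeff_mul_X_pow_of_natDegree_eq {p : R[X]}
    (h : p.natDegree = p.natTrailingDegree) : p = C p.trailingCoeff * X ^ p.natTrailingDegree := by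
  ext n
  rw [coeff_C_mul_X_pow]
  obtain hn | rfl | hn := lt_trichotomy n p.natTrailingDegree
  · rw [if_neg hn.ne, coeff_eq_zero_of_lt_natTrailingDegree hn]
  · rw [if_pos rfl, trailingCoeff]
  · rw [if_neg hn.ne', coeff_eq_zero_of_natDegree_lt (h ▸ hn)]

theorem trailingCoeff_eq_leadingCoeff_of_natDegree_eq {p : R[X]}
    (h : p.natDegree = p.natTrailingDegree) : p.trailingCoeff = p.leadingCoeff := by
  rw [trailingCoeff, leadingCoeff, h]

section Binomial
variable {a b : R} (d : ℕ)

theorem natDegree_C_mul_X_pow_add_C_mul_X_pow_succ (hb : b ≠ 0) :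
    (C a * X ^ d + C b * X ^ (d + 1)).natDegree = d + 1 := by
  rw [natDegree_add_eq_right_of_natDegree_lt] <;> rw [natDegree_C_mul_X_pow _ _ hb]
  exact (natDegree_C_mul_X_pow_le a d).trans_lt d.lt_succ_self

theorem leadingCoeff_C_mul_X_pow_add_C_mul_X_pow_succ (hb : b ≠ 0) :
    (C a * X ^ d + C b * X ^ (d + 1)).leadingCoeff = b := by
  rw [leadingCoeff, natDegree_C_mul_X_pow_add_C_mul_X_pow_succ d hb]
  simp

theorem natTrailingDegree_C_mul_X_pow_add_C_mul_X_pow_succ (ha : a ≠ 0) :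
    (C a * X ^ d + C b * X ^ (d + 1)).natTrailingDegree = d := by
  refine le_antisymm (natTrailingDegree_le_of_ne_zero (by simpa)) (le_natTrailingDegree ?_ ?_)
  · exact fun h => ha (by simpa using congr_arg (coeff · d) h)
  · intro m hm
    simp [coeff_X_pow, hm.ne, (hm.trans d.lt_succ_self).ne]

theorem trailingCoeff_C_mul_X_pow_add_C_mul_X_pow_succ (ha : a ≠ 0) :
    (C a * X ^ d + C b * X ^ (d + 1)).trailingCoeff = a := by
  rw [trailingCoeff, natTrailingDegree_C_mul_X_pow_add_C_mul_X_pow_succ d ha]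
  simp

end Binomial

variable [NoZeroDivisors R]

theorem natDegree_eq_natTrailingDegree_or_of_natDegree_mul_eq_succ {p q : R[X]}
    (h : (p * q).natDegree = (p * q).natTrailingDegree + 1) :
    p.natDegree = p.natTrailingDegree ∨ q.natDegree = q.natTrailingDegree := by
  have hpq : p * q ≠ 0 := fun h0 => by simp [h0] at h
  rw [natDegree_mul (left_ne_zero_of_mul hpq) (right_ne_zero_of_mul hpq),
    natTrailingDegree_mul (left_ne_zero_of_mul hpq) (right_ne_zero_of_mul hpq)] at h
  have := natTrailingDegree_le_natDegree p
  have := natTrailingDegree_le_natDegree q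
  omega

end Polynomial

open scoped Polynomial

namespace MvPolynomial
variable {σ R : Type*} [CommSemiring R]

/-- `p ↦ p(t • X)`; the coefficient of `t ^ n` is the degree-`n` homogeneous component of `p`. -/
noncomputable def homogenization : MvPolynomial σ R →ₐ[R] (MvPolynomial σ R)[X] :=
  aeval fun i => Polynomial.C (X i) * Polynomial.X

theorem homogenization_monomial (s : σ →₀ ℕ) (r : R) :
    homogenization (monomial s r) =
      Polynomial.C (monomial s r) * Polynomial.X ^ Finsupp.weight 1 s := by
  rw [homogenization, aeval_monomial, monomial_eq]
  simp only [mul_pow, Finsupp.prod_mul, ← map_pow, ← map_finsuppProd, map_mul, algebraMap_eq,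
    Polynomial.algebraMap_apply, mul_assoc]
  simp [Finsupp.prod, Finset.prod_pow_eq_pow_sum, Finsupp.weight_apply, Finsupp.sum]

theorem IsHomogeneous.homogenization_eq {p : MvPolynomial σ R} {n : ℕ} (hp : p.IsHomogeneous n) :
    homogenization p = Polynomial.C p * Polynomial.X ^ n := by
  conv_lhs => rw [p.as_sum]
  rw [map_sum, Finset.sum_congr rfl fun s hs => by
      rw [homogenization_monomial, hp (mem_support_iff.mp hs)],
    ← Finset.sum_mul, ← map_sum, ← p.as_sum]

theorem eval_one_homogenization (p : MvPolynomial σ R) : (homogenization p).eval 1 = p := by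
  induction p using MvPolynomial.induction_on with
  | C a => simp [homogenization]
  | add p q hp hq => simp [hp, hq]
  | mul_X p i hp => simp_all [homogenization]

theorem eq_trailingCoeff_homogenization {p : MvPolynomial σ R}
    (h : (homogenization p).natDegree = (homogenization p).natTrailingDegree) :
    p = (homogenization p).trailingCoeff := by
  conv_lhs =>
    rw [← eval_one_homogenization p, Polynomial.eq_C_trailingCoeff_mul_X_pow_of_natDegree_eq h]
  simp

variable [NoZeroDivisors R]

theorem irreducible_of_natDegree_homogenization_eq_succ {p : MvPolynomial σ R}
    (hdeg : (homogenization p).natDegree = (homogenization p).natTrailingDegree + 1)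
    (hcop : ∀ k, k ∣ (homogenization p).trailingCoeff → k ∣ (homogenization p).leadingCoeff →
      IsUnit k) :
    Irreducible p := by
  have isUnit_of_factor : ∀ a b, p = a * b →
      (homogenization a).natDegree = (homogenization a).natTrailingDegree → IsUnit a := by
    intro a b hab ha
    rw [eq_trailingCoeff_homogenization ha]
    rw [hab, map_mul] at hcop
    refine hcop _ ⟨_, Polynomial.trailingCoeff_mul _ _⟩ ?_
    rw [Polynomial.leadingCoeff_mul, ← Polynomial.trailingCoeff_eq_leadingCoeff_of_natDegree_eq ha]
    exact dvd_mul_right _ _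
  refine ⟨fun hu => ?_, fun a b hab => ?_⟩
  · have := Polynomial.natDegree_eq_zero_of_isUnit (hu.map homogenization)
    omega
  · rw [hab, map_mul] at hdeg
    rcases Polynomial.natDegree_eq_natTrailingDegree_or_of_natDegree_mul_eq_succ hdeg with ha | hb
    · exact .inl (isUnit_of_factor a b hab ha)
    · exact .inr (isUnit_of_factor b a (hab.trans (mul_comm a b)) hb)

end MvPolynomial

open MvPolynomial

theorem stmt_9_general {K : Type*} [Field K] (d : ℕ)
    (h₁ h₂ : MvPolynomial (Fin 2) K)
    (hh₁ : h₁.IsHomogeneous d) (hh₂ : h₂.IsHomogeneous (d + 1))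
    (h₁ne : h₁ ≠ 0) (h₂ne : h₂ ≠ 0)
    (hcop : ∀ k : MvPolynomial (Fin 2) K, k ∣ h₁ → k ∣ h₂ → IsUnit k) :
    Irreducible (h₁ + h₂) := by
  have hG : homogenization (h₁ + h₂) =
      Polynomial.C h₁ * Polynomial.X ^ d + Polynomial.C h₂ * Polynomial.X ^ (d + 1) := by
    rw [map_add, hh₁.homogenization_eq, hh₂.homogenization_eq]
  apply irreducible_of_natDegree_homogenization_eq_succ
  · rw [hG, Polynomial.natDegree_C_mul_X_pow_add_C_mul_X_pow_succ d h₂ne,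
      Polynomial.natTrailingDegree_C_mul_X_pow_add_C_mul_X_pow_succ d h₁ne]
  · rw [hG, Polynomial.leadingCoeff_C_mul_X_pow_add_C_mul_X_pow_succ d h₂ne,
      Polynomial.trailingCoeff_C_mul_X_pow_add_C_mul_X_pow_succ d h₁ne]
    exact hcop

/-- Over an algebraically closed field `K`, if `g ∈ K[X,Y]` is the sum of two
nonzero homogeneous polynomials of consecutive degrees `d` and `d+1` having no common non-unit
factor, then `g` is irreducible. -/
theorem stmt_9 {K : Type*} [Field K] [IsAlgClosed K] (d : ℕ)
    (h₁ h₂ : MvPolynomial (Fin 2) K)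
    (hh₁ : h₁.IsHomogeneous d) (hh₂ : h₂.IsHomogeneous (d + 1))
    (h₁ne : h₁ ≠ 0) (h₂ne : h₂ ≠ 0)
    (hcop : ∀ k : MvPolynomial (Fin 2) K, k ∣ h₁ → k ∣ h₂ → IsUnit k) :
    Irreducible (h₁ + h₂) :=
  stmt_9_general d h₁ h₂ hh₁ hh₂ h₁ne h₂ne hcop
end

section
/- Let q > d be a prime power, 1 ≤ s ≤ d-2, and fix a = (a_{d-1},...,a_{d-s}) ∈ F_q^s. For b = (b_{d-s-1},...,b_1) ∈ F_q^{d-s-1}, let f_b := T^d + Σ_{i=1}^s a_{d-i}T^{d-i} + Σ_{i=s+1}^{d-1} b_{d-i}T^{d-i}. Then the average value set V(d,s,a) := q^{-(d-s-1)} Σ_b V(f_b) satisfies V(d,s,a) = Σ_{r=1}^{d-s} (-1)^{r-1} C(q,r) q^{1-r} + q^{-(d-s-1)} Σ_{r=d-s+1}^{d} (-1)^{r-1} χ_r^a, where χ_r^a is the number of r-element subsets X_r of F_q such that there exists (b, b_0) ∈ F_q^{d-s} with (f_b + b_0) vanishing identically on X_r. -/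
/-!
Write `f_b + b₀ = P + t` with `P = T^d + ∑ a_{d-i} T^{d-i}`; as `(b, b₀)` ranges over
`F_q^{d-s}`, `t` ranges over all polynomials of degree `< d - s`. Then `∑_b V(f_b)` counts the
`t` for which `P + t` has a root in `F_q`, and inclusion–exclusion over the root set turns it into
`∑_{Z ≠ ∅} (-1)^{|Z|-1} N(Z)`, where `N(Z)` counts the `t` with `P + t` vanishing on `Z`.
If `|Z| ≤ d - s`, Lagrange interpolation gives `N(Z) = q^{d-s-|Z|}`. If `|Z| ≥ d - s`, two such
`t` differ by a polynomial of degree `< |Z|` vanishing on `Z`, so `N(Z) ∈ {0, 1}`, and for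
`d - s < r ≤ d` the sum of `N(Z)` over `|Z| = r` is `χ_r`.
If `|Z| > d`, then `N(Z) = 0`, because `P + t` is a nonzero polynomial of degree `d`.
-/

open Polynomial Finset

theorem card_image_eq_card_filter_exists_add_eq_zero {α G : Type*} [Fintype α] [AddGroup G]
    [Fintype G] [DecidableEq G] (g : α → G) :
    #(univ.image g) = #{y | ∃ x, g x + y = 0} := by
  rw [← card_image_of_injective _ neg_injective, image_image]
  congr 1
  ext y
  simp only [mem_image, mem_univ, true_and, mem_filter, Function.comp_apply]
  exact exists_congr fun x ↦ ⟨fun h ↦ h ▸ add_neg_cancel (g x), neg_eq_of_add_eq_zero_right⟩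

theorem card_filter_exists_eq_sum_powersetCard {S α : Type*} [Fintype S] [Fintype α]
    [DecidableEq α] (R : S → α → Prop) [∀ s a, Decidable (R s a)] :
    (#{s | ∃ a, R s a} : ℤ) = ∑ r ∈ Icc 1 (Fintype.card α),
      (-1) ^ (r - 1) * ∑ Z ∈ powersetCard r univ, (#{s | ∀ a ∈ Z, R s a} : ℤ) := by
  classical
  have hunion : ({s | ∃ a, R s a} : Finset S) = univ.biUnion fun a ↦ {s | R s a} := by
    ext; simp
  have hinter : ∀ t : univ.powerset.filter (·.Nonempty), (-1 : ℤ) ^ (#t.1 + 1) *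
      #(t.1.inf' (mem_filter.1 t.2).2 (fun a ↦ ({s | R s a} : Finset S)))
        = (-1 : ℤ) ^ (#t.1 + 1) * #{s | ∀ a ∈ t.1, R s a} := by
    intro t; congr 3; ext; simp
  rw [hunion, inclusion_exclusion_card_biUnion, Fintype.sum_congr _ _ hinter,
    sum_coe_sort (univ.powerset.filter (·.Nonempty))
      (fun Z ↦ (-1 : ℤ) ^ (#Z + 1) * #{s | ∀ a ∈ Z, R s a}),
    ← sum_fiberwise_of_maps_to (g := card) (t := Icc 1 (Fintype.card α))]
  · refine sum_congr rfl fun r hr ↦ ?_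
    obtain ⟨hr1, -⟩ := mem_Icc.1 hr
    rw [mul_sum]
    refine sum_congr ?_ fun Z hZ ↦ ?_
    · ext Z
      simp only [mem_filter, mem_powerset, subset_univ, true_and, mem_powersetCard_univ]
      exact ⟨fun h ↦ h.2, fun h ↦ ⟨card_pos.1 (h ▸ hr1), h⟩⟩
    · rw [mem_powersetCard_univ.1 hZ, show r + 1 = r - 1 + 2 by omega, pow_add, neg_one_sq,
        mul_one]
  · intro Z hZ
    simp only [mem_filter, mem_powerset] at hZ
    exact mem_Icc.2 ⟨card_pos.2 hZ.2, card_le_univ Z⟩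

theorem zpow_one_sub_eq_pow_sub_div_pow {K : Type*} [DivisionRing K] {q : K} (hq : q ≠ 0)
    {n r : ℕ} (hr : 1 ≤ r) (hrn : r ≤ n) : q ^ ((1 : ℤ) - r) = q ^ (n - r) / q ^ (n - 1) := by
  rw [← zpow_natCast, ← zpow_natCast, ← zpow_sub₀ hq]
  congr 1
  omega

def revCoeffEquiv (α : Type*) (k : ℕ) : (Fin k → α) × α ≃ (Fin (k + 1) → α) where
  toFun p := Fin.cons p.2 (p.1 ∘ Fin.rev)
  invFun v := (Fin.tail v ∘ Fin.rev, v 0)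
  left_inv p := by simp [Function.comp_def]
  right_inv v := by ext i; cases i using Fin.cases <;> simp [Fin.tail]

section Semiring

variable {R : Type*} [Semiring R]

theorem C_add_sum_C_mul_X_pow_sub (k : ℕ) (b : Fin k → R) (b₀ : R) :
    C b₀ + ∑ j : Fin k, C (b j) * X ^ (k - (j : ℕ))
      = ((degreeLTEquiv R (k + 1)).symm (revCoeffEquiv R k (b, b₀)) : R[X]) := by
  change _ = ∑ i : Fin (k + 1), monomial (i : ℕ) (revCoeffEquiv R k (b, b₀) i)
  rw [Fin.sum_univ_succ, ← Equiv.sum_comp Fin.revPerm]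
  simp only [Fin.revPerm_apply, Fin.val_rev, C_mul_X_pow_eq_monomial, Fin.coe_ofNat_eq_mod,
    Nat.zero_mod, revCoeffEquiv, Equiv.coe_fn_mk, Fin.cons_zero, monomial_zero_left, Fin.val_succ,
    Fin.cons_succ, Function.comp_apply]
  congr 1
  refine Fintype.sum_congr _ _ fun j ↦ ?_
  rw [Nat.sub_sub_self (by omega)]

theorem natDegree_X_pow_add_sum_C_mul_X_pow_sub [Nontrivial R] {s d : ℕ} (hs : s ≤ d)
    (a : Fin s → R) : (X ^ d + ∑ j : Fin s, C (a j) * X ^ (d - 1 - (j : ℕ))).natDegree = d := by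
  refine (natDegree_add_eq_left_of_degree_lt ?_).trans (natDegree_X_pow d)
  rw [degree_X_pow]
  exact mem_degreeLT.1 <| sum_mem fun j _ ↦ mem_degreeLT.2 <|
    (degree_C_mul_X_pow_le _ _).trans_lt <| by exact_mod_cast (by omega : d - 1 - (j : ℕ) < d)

noncomputable def evalOn (n : ℕ) (Z : Finset R) : (Fin n → R) →ₗ[R] Z → R :=
  (LinearMap.pi fun c : Z ↦ leval (c : R)) ∘ₗ (degreeLT R n).subtype ∘ₗ
    (degreeLTEquiv R n).symm.toLinearMap

@[simp]
theorem evalOn_apply (n : ℕ) (Z : Finset R) (v : Fin n → R) (c : Z) :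
    evalOn n Z v c = ((degreeLTEquiv R n).symm v : R[X]).eval (c : R) := rfl

end Semiring

section Field

variable {F : Type*} [Field F] [DecidableEq F]

theorem evalOn_surjective {n : ℕ} {Z : Finset F} (hZ : #Z ≤ n) :
    Function.Surjective (evalOn n Z) := by
  intro w
  let t := (Lagrange.funEquivDegreeLT (Set.injOn_id (Z : Set F))).symm w
  refine ⟨degreeLTEquiv F n ⟨t, degreeLT_mono hZ t.2⟩, funext fun c ↦ ?_⟩
  rw [evalOn_apply, LinearEquiv.symm_apply_apply]
  exact congrFun ((Lagrange.funEquivDegreeLT (Set.injOn_id (Z : Set F))).apply_symm_apply w) c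

variable [Fintype F]

noncomputable def vanishingCoeffs (P : F[X]) (n : ℕ) (Z : Finset F) : Finset (Fin n → F) :=
  {v | ∀ c ∈ Z, (P + ((degreeLTEquiv F n).symm v : F[X])).eval c = 0}

theorem card_vanishingCoeffs_of_card_le (P : F[X]) {n : ℕ} {Z : Finset F} (hZ : #Z ≤ n) :
    #(vanishingCoeffs P n Z) = Fintype.card F ^ (n - #Z) := by
  let φ := (evalOn n Z).toAddMonoidHom
  have hfiber : vanishingCoeffs P n Z = ({v | φ v = fun c : Z ↦ -P.eval (c : F)} : Finset _) := by
    ext v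
    simp only [vanishingCoeffs, mem_filter, mem_univ, true_and, funext_iff, Subtype.forall,
      eval_add, add_eq_zero_iff_eq_neg', φ, LinearMap.toAddMonoidHom_coe, evalOn_apply]
  have hsum := card_eq_sum_card_fiberwise (f := φ) (s := univ) (t := univ) fun _ _ ↦ mem_univ _
  rw [sum_congr rfl fun w _ ↦ AddMonoidHom.card_fiber_eq_of_mem_range φ
    (evalOn_surjective hZ w) (evalOn_surjective hZ fun c : Z ↦ -P.eval (c : F)), sum_const,
    ← hfiber, card_univ, card_univ, Fintype.card_fun, Fintype.card_fun, Fintype.card_coe,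
    Fintype.card_fin, smul_eq_mul, ← Nat.pow_sub_mul_pow _ hZ] at hsum
  exact Nat.eq_of_mul_eq_mul_left (pow_pos Fintype.card_pos _) (hsum.symm.trans (mul_comm _ _))

theorem card_vanishingCoeffs_le_one (P : F[X]) {n : ℕ} {Z : Finset F} (hZ : n ≤ #Z) :
    #(vanishingCoeffs P n Z) ≤ 1 := by
  refine card_le_one.2 fun v hv w hw ↦ (degreeLTEquiv F n).symm.injective (Subtype.ext ?_)
  have hdeg : ((degreeLTEquiv F n).symm v - (degreeLTEquiv F n).symm w : F[X]).degree < #Z :=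
    (mem_degreeLT.1 (sub_mem ((degreeLTEquiv F n).symm v).2
      ((degreeLTEquiv F n).symm w).2)).trans_le (by exact_mod_cast hZ)
  refine eq_of_degree_sub_lt_of_eval_finset_eq Z hdeg fun c hc ↦ ?_
  simp only [vanishingCoeffs, mem_filter, mem_univ, true_and, eval_add] at hv hw
  exact add_left_cancel ((hv c hc).trans (hw c hc).symm)

theorem vanishingCoeffs_eq_empty {P : F[X]} (hP : P ≠ 0) {n : ℕ} (hn : n ≤ P.natDegree)
    {Z : Finset F} (hZ : P.natDegree < #Z) : vanishingCoeffs P n Z = ∅ := by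
  refine eq_empty_of_forall_notMem fun v hv ↦ ?_
  have hlt : ((degreeLTEquiv F n).symm v : F[X]).degree < P.degree :=
    (mem_degreeLT.1 ((degreeLTEquiv F n).symm v).2).trans_le
      ((Nat.cast_le.2 hn).trans (degree_eq_natDegree hP).ge)
  have hne : P + ((degreeLTEquiv F n).symm v : F[X]) ≠ 0 := by
    rw [← degree_ne_bot, degree_add_eq_left_of_degree_lt hlt, degree_ne_bot]
    exact hP
  exact hne (eq_zero_of_natDegree_lt_card_of_eval_eq_zero' _ Z (mem_filter.1 hv).2
    ((natDegree_add_eq_left_of_degree_lt hlt).symm ▸ hZ))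

theorem sum_card_vanishingCoeffs_of_le (P : F[X]) {n r : ℕ} (hr : r ≤ n) :
    ∑ Z ∈ powersetCard r (univ : Finset F), #(vanishingCoeffs P n Z)
      = (Fintype.card F).choose r * Fintype.card F ^ (n - r) := by
  rw [sum_congr rfl fun Z hZ ↦ by
      rw [card_vanishingCoeffs_of_card_le P ((mem_powersetCard_univ.1 hZ).trans_le hr),
        mem_powersetCard_univ.1 hZ],
    sum_const, card_powersetCard, card_univ, smul_eq_mul]

theorem sum_card_vanishingCoeffs_of_ge (P : F[X]) {n r : ℕ} (hr : n ≤ r) :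
    ∑ Z ∈ powersetCard r (univ : Finset F), #(vanishingCoeffs P n Z)
      = #{Z ∈ powersetCard r univ | (vanishingCoeffs P n Z).Nonempty} := by
  rw [card_filter]
  refine sum_congr rfl fun Z hZ ↦ ?_
  have hle := card_vanishingCoeffs_le_one P (hr.trans (mem_powersetCard_univ.1 hZ).ge)
  split_ifs with h
  · exact le_antisymm hle (card_pos.2 h)
  · exact card_eq_zero.2 (not_nonempty_iff_eq_empty.1 h)

theorem card_exists_root_eq {P : F[X]} (hP : P ≠ 0) {n : ℕ} (hn : n ≤ P.natDegree)
    (hPq : P.natDegree ≤ Fintype.card F) :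
    (#{v : Fin n → F | ∃ c, (P + ((degreeLTEquiv F n).symm v : F[X])).eval c = 0} : ℤ)
      = ∑ r ∈ Icc 1 n, (-1 : ℤ) ^ (r - 1) *
          ((Fintype.card F).choose r * Fintype.card F ^ (n - r) : ℕ)
        + ∑ r ∈ Icc (n + 1) P.natDegree, (-1 : ℤ) ^ (r - 1) *
          (#{Z ∈ powersetCard r univ | (vanishingCoeffs P n Z).Nonempty} : ℕ) := by
  set T : ℕ → ℤ := fun r ↦ (-1) ^ (r - 1) *
    ∑ Z ∈ powersetCard r (univ : Finset F), (#(vanishingCoeffs P n Z) : ℤ)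
  have hhigh : ∑ r ∈ Ioc P.natDegree (Fintype.card F), T r = 0 := by
    refine sum_eq_zero fun r hr ↦ mul_eq_zero_of_right _ (sum_eq_zero fun Z hZ ↦ ?_)
    rw [vanishingCoeffs_eq_empty hP hn ((mem_Ioc.1 hr).1.trans_eq
      (mem_powersetCard_univ.1 hZ).symm), card_empty, Nat.cast_zero]
  calc (#{v : Fin n → F | ∃ c, (P + ((degreeLTEquiv F n).symm v : F[X])).eval c = 0} : ℤ)
      = ∑ r ∈ Ioc 0 n, T r + ∑ r ∈ Ioc n P.natDegree, T r
          + ∑ r ∈ Ioc P.natDegree (Fintype.card F), T r := by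
        rw [card_filter_exists_eq_sum_powersetCard, sum_Ioc_consecutive _ (Nat.zero_le n) hn,
          sum_Ioc_consecutive _ (Nat.zero_le _) hPq, ← Icc_add_one_left_eq_Ioc]
        rfl
    _ = _ := by
        rw [hhigh, add_zero, Icc_add_one_left_eq_Ioc, ← zero_add 1, Icc_add_one_left_eq_Ioc]
        congr 1 <;> refine sum_congr rfl fun r hr ↦ ?_ <;> simp only [T] <;> congr 1
        · exact_mod_cast sum_card_vanishingCoeffs_of_le P (mem_Ioc.1 hr).2
        · exact_mod_cast sum_card_vanishingCoeffs_of_ge P (mem_Ioc.1 hr).1.le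

theorem sum_card_image_eval_eq_card_exists_root {k : ℕ} (P : F[X]) (f : (Fin k → F) → F[X])
    (hf : ∀ b b₀ c, (f b).eval c + b₀ =
      (P + ((degreeLTEquiv F (k + 1)).symm (revCoeffEquiv F k (b, b₀)) : F[X])).eval c) :
    ∑ b, #(univ.image fun c ↦ (f b).eval c) = #{v : Fin (k + 1) → F |
      ∃ c, (P + ((degreeLTEquiv F (k + 1)).symm v : F[X])).eval c = 0} := by
  simp_rw [card_image_eq_card_filter_exists_add_eq_zero, card_filter]
  rw [← Fintype.sum_prod_type']
  exact Fintype.sum_equiv (revCoeffEquiv F k) _ _ fun p ↦ by simp only [hf]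

theorem exists_forall_eval_add_eq_zero_iff {k : ℕ} (P : F[X]) (f : (Fin k → F) → F[X])
    (hf : ∀ b b₀ c, (f b).eval c + b₀ =
      (P + ((degreeLTEquiv F (k + 1)).symm (revCoeffEquiv F k (b, b₀)) : F[X])).eval c)
    (Z : Finset F) :
    (∃ b b₀, ∀ c ∈ Z, (f b).eval c + b₀ = 0) ↔ (vanishingCoeffs P (k + 1) Z).Nonempty := by
  simp only [vanishingCoeffs, filter_nonempty_iff, mem_univ, true_and,
    ← (revCoeffEquiv F k).exists_congr_right, Prod.exists, hf]

end Field

/-- For `q > d`, `1 ≤ s ≤ d-2` and fixed `a = (a_{d-1},…,a_{d-s}) ∈ F_q^s`,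
let `f_b := T^d + ∑_{i=1}^s a_{d-i}T^{d-i} + ∑_{i=s+1}^{d-1} b_{d-i}T^{d-i}` for
`b = (b_{d-s-1},…,b_1) ∈ F_q^{d-s-1}`.  Then the average value set
`V(d,s,a) = q^{-(d-s-1)} ∑_b V(f_b)` equals
`∑_{r=1}^{d-s} (-1)^{r-1} C(q,r) q^{1-r} + q^{-(d-s-1)} ∑_{r=d-s+1}^{d} (-1)^{r-1} χ_r^a`,
where `χ_r^a` counts the `r`-element subsets of `F_q` on which some `f_b + b_0` vanishes
identically. -/
theorem stmt_11 {F : Type*} [Field F] [Fintype F] [DecidableEq F] (q d s : ℕ)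
    (hq : Fintype.card F = q) (hdq : d < q) (hs1 : 1 ≤ s) (hs2 : s ≤ d - 2)
    (a : Fin s → F)
    (f : (Fin (d - s - 1) → F) → Polynomial F)
    (hf : ∀ b, f b = X ^ d + (∑ j : Fin s, C (a j) * X ^ (d - 1 - (j : ℕ)))
        + ∑ j : Fin (d - s - 1), C (b j) * X ^ (d - s - 1 - (j : ℕ)))
    (χ : ℕ → ℕ)
    (hχ : ∀ r, χ r = Nat.card {X : Finset F // X.card = r ∧
        ∃ (b : Fin (d - s - 1) → F) (b₀ : F), ∀ c ∈ X, (f b).eval c + b₀ = 0}) :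
    (∑ b : Fin (d - s - 1) → F,
        ((Finset.image (fun c => (f b).eval c) Finset.univ).card : ℝ)) / (q : ℝ) ^ (d - s - 1)
      = (∑ r ∈ Finset.Icc 1 (d - s),
            (-1 : ℝ) ^ (r - 1) * (Nat.choose q r : ℝ) * (q : ℝ) ^ ((1 : ℤ) - (r : ℤ)))
        + (1 / (q : ℝ) ^ (d - s - 1)) *
            ∑ r ∈ Finset.Icc (d - s + 1) d, (-1 : ℝ) ^ (r - 1) * (χ r : ℝ) := by
  have hkn : d - s - 1 + 1 = d - s := by omega
  have hPdeg := natDegree_X_pow_add_sum_C_mul_X_pow_sub (by omega : s ≤ d) a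
  set P : F[X] := X ^ d + ∑ j : Fin s, C (a j) * X ^ (d - 1 - (j : ℕ))
  have hP0 : P ≠ 0 := ne_zero_of_natDegree_gt (n := 0) (by omega)
  have hfP : ∀ b b₀ c, (f b).eval c + b₀ = (P + ((degreeLTEquiv F (d - s - 1 + 1)).symm
      (revCoeffEquiv F (d - s - 1) (b, b₀)) : F[X])).eval c := by
    intro b b₀ c
    simp only [hf, ← C_add_sum_C_mul_X_pow_sub, eval_add, eval_C]
    ring
  have hχP : ∀ r, χ r =
      #{Z ∈ powersetCard r univ | (vanishingCoeffs P (d - s - 1 + 1) Z).Nonempty} := by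
    intro r
    rw [hχ, Nat.card_eq_fintype_card, Fintype.card_subtype, ← univ_filter_card_eq, filter_filter]
    simp only [exists_forall_eval_add_eq_zero_iff P f hfP]
  have hcount := card_exists_root_eq hP0 (n := d - s - 1 + 1) (by omega) (by omega)
  rw [← Nat.cast_sum, sum_card_image_eval_eq_card_exists_root P f hfP, ← Int.cast_natCast,
    hcount]
  push_cast
  simp_rw [hχP]
  rw [hPdeg, hkn, add_div, sum_div, one_div_mul_eq_div, hq]
  congr 1
  refine sum_congr rfl fun r hr ↦ ?_
  rw [zpow_one_sub_eq_pow_sub_div_pow (Nat.cast_ne_zero.2 (by omega)) (mem_Icc.1 hr).1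
    (mem_Icc.1 hr).2]
  ring
end

section
/- For positive integers d ≥ 5, let k_0 := (-1 + √(5+4d))/2 and define h(k) := C(d,k)^2 · (d-k)! for integers 0 ≤ k ≤ d-1. Then h is unimodal on [0, d-1] and attains its maximum at ⌊k_0⌋. -/
/-!
Since `C(d,k+1)·(k+1) = C(d,k)·(d-k)`, the ratio `h(k+1)/h(k)` equals `(d-k)/(k+1)²`, so `h`
increases while `(k+1)² + k ≤ d` and decreases once `(k+1)² + k ≥ d`. The number `k₀` is the
nonnegative root of `x² + x = d + 1`, and `m = ⌊k₀⌋` is exactly the integer with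
`m² + m ≤ d + 1 < (m+1)² + (m+1)`; this is the threshold between the two regimes.
-/

open Nat

theorem le_apply_of_le_succ_of_succ_le {α : Type*} [Preorder α] {f : ℕ → α} {m : ℕ}
    (hinc : ∀ k < m, f k ≤ f (k + 1)) (hdec : ∀ k ≥ m, f (k + 1) ≤ f k) (k : ℕ) :
    f k ≤ f m := by
  rcases le_total k m with hkm | hmk
  · refine monotoneOn_of_le_succ Set.ordConnected_Iic (fun a _ _ ha ↦ ?_) hkm le_rfl hkm
    rw [Order.succ_eq_add_one] at ha ⊢
    exact hinc a ha
  · exact antitoneOn_nat_Ici_of_succ_le hdec (le_refl m) hmk hmk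

theorem floor_sq_add_floor_le_and_lt {x : ℝ} {n : ℕ} (hx : 0 ≤ x) (hxn : x ^ 2 + x = n) :
    ⌊x⌋₊ ^ 2 + ⌊x⌋₊ ≤ n ∧ n < (⌊x⌋₊ + 1) ^ 2 + (⌊x⌋₊ + 1) := by
  have hle : (⌊x⌋₊ : ℝ) ≤ x := Nat.floor_le hx
  have hlt : x < ⌊x⌋₊ + 1 := Nat.lt_floor_add_one x
  constructor
  · exact_mod_cast (show (⌊x⌋₊ : ℝ) ^ 2 + ⌊x⌋₊ ≤ n by nlinarith)
  · exact_mod_cast (show (n : ℝ) < (⌊x⌋₊ + 1) ^ 2 + (⌊x⌋₊ + 1) by nlinarith)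

def binomSqMulFactorial (d k : ℕ) : ℕ := d.choose k ^ 2 * (d - k)!

theorem binomSqMulFactorial_succ_mul (d k : ℕ) :
    binomSqMulFactorial d (k + 1) * (k + 1) ^ 2 = binomSqMulFactorial d k * (d - k) := by
  unfold binomSqMulFactorial
  rcases lt_or_ge k d with hkd | hdk
  · have hsub : d - k = (d - (k + 1)) + 1 := by omega
    calc d.choose (k + 1) ^ 2 * (d - (k + 1))! * (k + 1) ^ 2
        = (d.choose (k + 1) * (k + 1)) ^ 2 * (d - (k + 1))! := by ring
      _ = (d.choose k * (d - k)) ^ 2 * (d - (k + 1))! := by rw [choose_succ_right_eq]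
      _ = d.choose k ^ 2 * ((d - (k + 1)) + 1)! * (d - k) := by
        rw [factorial_succ, ← hsub]; ring
      _ = d.choose k ^ 2 * (d - k)! * (d - k) := by rw [← hsub]
  · simp [choose_eq_zero_of_lt (Nat.lt_succ_of_le hdk), Nat.sub_eq_zero_of_le hdk]

theorem binomSqMulFactorial_le_succ {d k : ℕ} (hk : (k + 1) ^ 2 + k ≤ d) :
    binomSqMulFactorial d k ≤ binomSqMulFactorial d (k + 1) := by
  refine Nat.le_of_mul_le_mul_right ?_ (by positivity : 0 < (k + 1) ^ 2)
  rw [binomSqMulFactorial_succ_mul]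
  exact Nat.mul_le_mul_left _ (by omega)

theorem binomSqMulFactorial_succ_le {d k : ℕ} (hk : d ≤ (k + 1) ^ 2 + k) :
    binomSqMulFactorial d (k + 1) ≤ binomSqMulFactorial d k := by
  refine Nat.le_of_mul_le_mul_right ?_ (by positivity : 0 < (k + 1) ^ 2)
  rw [binomSqMulFactorial_succ_mul]
  exact Nat.mul_le_mul_left _ (by omega)

theorem stmt_15_general (d : ℕ)
    (h : ℕ → ℕ) (hh : ∀ k, h k = (Nat.choose d k) ^ 2 * Nat.factorial (d - k))
    (k₀ : ℝ) (hk₀ : k₀ = (-1 + Real.sqrt (5 + 4 * (d : ℝ))) / 2) :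
    (∀ k : ℕ, k + 1 ≤ d - 1 →
        (k < Nat.floor k₀ → h k ≤ h (k + 1)) ∧ (Nat.floor k₀ ≤ k → h (k + 1) ≤ h k)) ∧
    ∀ k : ℕ, k ≤ d - 1 → h k ≤ h (Nat.floor k₀) := by
  obtain rfl : h = binomSqMulFactorial d := funext hh
  have hsqrt : Real.sqrt (5 + 4 * (d : ℝ)) ^ 2 = 5 + 4 * d := Real.sq_sqrt (by positivity)
  have hk₀_nonneg : 0 ≤ k₀ := by
    rw [hk₀]
    nlinarith [Real.sqrt_nonneg (5 + 4 * (d : ℝ))]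
  have hroot : k₀ ^ 2 + k₀ = ((d + 1 : ℕ) : ℝ) := by
    rw [hk₀]
    push_cast
    linear_combination hsqrt / 4
  obtain ⟨hlow, hhigh⟩ := floor_sq_add_floor_le_and_lt hk₀_nonneg hroot
  have hinc : ∀ k < ⌊k₀⌋₊, binomSqMulFactorial d k ≤ binomSqMulFactorial d (k + 1) :=
    fun k hk ↦ binomSqMulFactorial_le_succ (by nlinarith)
  have hdec : ∀ k ≥ ⌊k₀⌋₊, binomSqMulFactorial d (k + 1) ≤ binomSqMulFactorial d k :=
    fun k hk ↦ binomSqMulFactorial_succ_le (by nlinarith)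
  exact ⟨fun k _ ↦ ⟨hinc k, hdec k⟩, fun k _ ↦ le_apply_of_le_succ_of_succ_le hinc hdec k⟩

/-- For `d ≥ 5`, let `k₀ := (-1 + √(5+4d))/2` and
`h(k) := C(d,k)² (d-k)!`.  Then `h` is unimodal on `[0, d-1]`: it is nondecreasing before
`⌊k₀⌋`, nonincreasing from `⌊k₀⌋` on, and attains its maximum at `⌊k₀⌋`. -/
theorem stmt_15 (d : ℕ) (hd : 5 ≤ d)
    (h : ℕ → ℕ) (hh : ∀ k, h k = (Nat.choose d k) ^ 2 * Nat.factorial (d - k))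
    (k₀ : ℝ) (hk₀ : k₀ = (-1 + Real.sqrt (5 + 4 * (d : ℝ))) / 2) :
    (∀ k : ℕ, k + 1 ≤ d - 1 →
        (k < Nat.floor k₀ → h k ≤ h (k + 1)) ∧ (Nat.floor k₀ ≤ k → h (k + 1) ≤ h k)) ∧
    ∀ k : ℕ, k ≤ d - 1 → h k ≤ h (Nat.floor k₀) :=
  stmt_15_general d h hh k₀ hk₀
end

section
/- For every integer d ≥ 5, Σ_{k=0}^{d-1} C(d,k)^2 (d-k)! ≤ 14 · d^{d+1} · e^{2√d - d}. -/
/-!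
Writing `C(d,k)² (d-k)! = (d!)² / ((k!)² (d-k)!)`, Stirling's upper bound
`d! ≤ e √d (d/e)^d` and `d^(d-k) ≤ e^d (d-k)!` bound each summand by
`e² d^(d+1) e^(-d) · d^k / (k!)²`. Since `(2k)! ≤ 4^k (k!)²`, the term `d^k / (k!)²` is at
most the even term `(2√d)^(2k) / (2k)!` of the exponential series, so the remaining sum is at
most `e^(2√d)`; finally `e² < 14`.
-/

open Real Nat Finset

theorem Nat.factorial_two_mul_le_four_pow_mul_sq (k : ℕ) : (2 * k)! ≤ 4 ^ k * k ! ^ 2 := by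
  have hchoose : (2 * k)! = centralBinom k * k ! * k ! := by
    rw [centralBinom_eq_two_mul_choose,
      ← choose_mul_factorial_mul_factorial (by omega : k ≤ 2 * k), show 2 * k - k = k by omega]
  rw [hchoose, mul_assoc, ← sq]
  exact Nat.mul_le_mul_right _ (centralBinom_le_four_pow k)

theorem Stirling.factorial_le_exp_one_mul_sqrt_mul {n : ℕ} (hn : n ≠ 0) :
    (n ! : ℝ) ≤ exp 1 * √n * (n / exp 1) ^ n := by
  obtain ⟨m, rfl⟩ := exists_eq_succ_of_ne_zero hn
  have hseq : stirlingSeq (m + 1) ≤ exp 1 / √2 := by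
    simpa [stirlingSeq_one] using stirlingSeq'_antitone (Nat.zero_le m)
  rw [stirlingSeq, div_le_iff₀ (by positivity)] at hseq
  calc ((m + 1) ! : ℝ)
      ≤ exp 1 / √2 * (√(2 * ↑(m + 1)) * (↑(m + 1) / exp 1) ^ (m + 1)) := by
        exact_mod_cast hseq
    _ = exp 1 * √↑(m + 1) * (↑(m + 1) / exp 1) ^ (m + 1) := by
        rw [sqrt_mul zero_le_two]; field_simp

theorem Real.pow_div_factorial_sq_le {x : ℝ} (hx : 0 ≤ x) (k : ℕ) :
    x ^ k / (k ! : ℝ) ^ 2 ≤ (2 * √x) ^ (2 * k) / (2 * k)! := by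
  have hfac : ((2 * k)! : ℝ) ≤ 4 ^ k * (k ! : ℝ) ^ 2 := by
    exact_mod_cast factorial_two_mul_le_four_pow_mul_sq k
  rw [pow_mul, mul_pow, sq_sqrt hx, show (2 : ℝ) ^ 2 = 4 by norm_num, mul_pow,
    div_le_div_iff₀ (by positivity) (by positivity)]
  calc x ^ k * (2 * k)! ≤ x ^ k * (4 ^ k * (k ! : ℝ) ^ 2) := by gcongr
    _ = 4 ^ k * x ^ k * (k ! : ℝ) ^ 2 := by ring

theorem Real.sum_pow_div_factorial_sq_le_exp {x : ℝ} (hx : 0 ≤ x) (n : ℕ) :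
    ∑ k ∈ range n, x ^ k / (k ! : ℝ) ^ 2 ≤ exp (2 * √x) := by
  let a : ℕ → ℝ := fun j => (2 * √x) ^ j / (j ! : ℝ)
  calc ∑ k ∈ range n, x ^ k / (k ! : ℝ) ^ 2
      ≤ ∑ k ∈ range n, a (2 * k) := sum_le_sum fun k _ => pow_div_factorial_sq_le hx k
    _ = ∑ j ∈ (range n).image (2 * ·), a j :=
        (sum_image fun _ _ _ _ h => Nat.eq_of_mul_eq_mul_left two_pos h).symm
    _ ≤ ∑ j ∈ range (2 * n), a j := by
        refine sum_le_sum_of_subset_of_nonneg ?_ fun j _ _ => by positivity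
        intro j hj
        simp only [mem_image, mem_range] at hj ⊢
        omega
    _ ≤ exp (2 * √x) := sum_le_exp_of_nonneg (by positivity) _

theorem choose_sq_mul_factorial_sub_le {d k : ℕ} (hk : k < d) :
    (d.choose k : ℝ) ^ 2 * (d - k)!
      ≤ exp 1 ^ 2 * d ^ (d + 1) * exp (-d) * (d ^ k / (k ! : ℝ) ^ 2) := by
  have hd : d ≠ 0 := by omega
  have hfac_sq : (d ! : ℝ) ^ 2 ≤ exp 1 ^ 2 * d * ((d : ℝ) ^ d * exp (-d)) ^ 2 :=
    calc (d ! : ℝ) ^ 2 ≤ (exp 1 * √d * (d / exp 1) ^ d) ^ 2 := by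
          gcongr; exact Stirling.factorial_le_exp_one_mul_sqrt_mul hd
      _ = exp 1 ^ 2 * d * ((d : ℝ) ^ d * exp (-d)) ^ 2 := by
          rw [div_pow, exp_one_pow, exp_neg, mul_pow, mul_pow, sq_sqrt d.cast_nonneg]; ring
  have hfac_sub : (d : ℝ) ^ (d - k) * exp (-d) ≤ (d - k)! := by
    rw [exp_neg, ← div_eq_mul_inv, div_le_iff₀ (exp_pos _), mul_comm]
    exact (div_le_iff₀ (by positivity)).mp (pow_div_factorial_le_exp _ d.cast_nonneg (d - k))
  have hpow : (d : ℝ) ^ d = d ^ k * d ^ (d - k) := by rw [← pow_add, Nat.add_sub_cancel' hk.le]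
  have hlhs :
      (d.choose k : ℝ) ^ 2 * (d - k)! = (d ! : ℝ) ^ 2 / ((k ! : ℝ) ^ 2 * (d - k)!) := by
    rw [cast_choose ℝ hk.le]; field_simp
  rw [hlhs, div_le_iff₀ (by positivity)]
  calc (d ! : ℝ) ^ 2 ≤ exp 1 ^ 2 * d * ((d : ℝ) ^ d * exp (-d)) ^ 2 := hfac_sq
    _ = exp 1 ^ 2 * d ^ (d + 1) * exp (-d) * d ^ k * (d ^ (d - k) * exp (-d)) := by
        rw [pow_succ (d : ℝ) d, hpow]; ring
    _ ≤ exp 1 ^ 2 * d ^ (d + 1) * exp (-d) * d ^ k * (d - k)! := by gcongr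
    _ = exp 1 ^ 2 * d ^ (d + 1) * exp (-d) * (d ^ k / (k ! : ℝ) ^ 2)
          * ((k ! : ℝ) ^ 2 * (d - k)!) := by
        field_simp

theorem stmt_16_general (d : ℕ) :
    (∑ k ∈ Finset.range d, ((Nat.choose d k : ℝ) ^ 2 * Nat.factorial (d - k)))
      ≤ 14 * (d : ℝ) ^ (d + 1) * Real.exp (2 * Real.sqrt d - d) := by
  have hexp_sq : exp 1 ^ 2 ≤ 14 := by nlinarith [exp_one_lt_three, exp_pos 1]
  calc ∑ k ∈ range d, (d.choose k : ℝ) ^ 2 * (d - k)!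
      ≤ ∑ k ∈ range d, exp 1 ^ 2 * d ^ (d + 1) * exp (-d) * (d ^ k / (k ! : ℝ) ^ 2) :=
        sum_le_sum fun k hk => choose_sq_mul_factorial_sub_le (mem_range.mp hk)
    _ = exp 1 ^ 2 * d ^ (d + 1) * exp (-d) * ∑ k ∈ range d, (d : ℝ) ^ k / (k ! : ℝ) ^ 2 :=
        (mul_sum _ _ _).symm
    _ ≤ exp 1 ^ 2 * d ^ (d + 1) * exp (-d) * exp (2 * √d) := by
        gcongr; exact sum_pow_div_factorial_sq_le_exp d.cast_nonneg d
    _ ≤ 14 * d ^ (d + 1) * exp (2 * √d - d) := by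
        rw [sub_eq_add_neg, exp_add, ← mul_assoc, mul_right_comm _ (exp _)]
        gcongr

/-- For every integer `d ≥ 5`,
`∑_{k=0}^{d-1} C(d,k)² (d-k)! ≤ 14 d^{d+1} e^{2√d - d}`. -/
theorem stmt_16 (d : ℕ) (hd : 5 ≤ d) :
    (∑ k ∈ Finset.range d, ((Nat.choose d k : ℝ) ^ 2 * Nat.factorial (d - k)))
      ≤ 14 * (d : ℝ) ^ (d + 1) * Real.exp (2 * Real.sqrt d - d) :=
  stmt_16_general d
end
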